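/- With G, G' as in the diamond-reduction construction, if G' is not isomorphic to K4 and xy was not an edge of G, then the number of diamonds in G' equals the number of diamonds in G minus one. -/

import Mathlib

/-- A multigraph on vertex set `V`: a symmetric edge-multiplicity function with no loops. -/
structure Multigraph (V : Type*) where
  mult : V → V → ℕ
  symm : ∀ u v, mult u v = mult v u
  loopless : ∀ v, mult v v = 0

namespace Multigraph

variable {V : Type*}

/-- Adjacency: distinct vertices joined by at least one edge. -/
def Adj (G : Multigraph V) (u v : V) : Prop := u ≠ v ∧ 0 < G.mult u v

/-- The underlying simple graph. -/
def toSimple (G : Multigraph V) : SimpleGraph V where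
  Adj u v := u ≠ v ∧ 0 < G.mult u v
  symm := ⟨fun u v h => ⟨h.1.symm, by rw [G.symm v u]; exact h.2⟩⟩
  loopless := ⟨fun v h => h.1 rfl⟩

def Connected (G : Multigraph V) : Prop := G.toSimple.Connected

section Fin
variable [Fintype V] [DecidableEq V]

/-- The degree of a vertex, counting edge multiplicities. -/
def degree (G : Multigraph V) (v : V) : ℕ := ∑ u, G.mult v u

def IsCubic (G : Multigraph V) : Prop := ∀ v, G.degree v = 3

end Fin

variable [DecidableEq V]

/-- No induced claw `K_{1,3}` (centre `c`, leaves `a b d`). -/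
def IsClawFree (G : Multigraph V) : Prop :=
  ¬ ∃ c a b d : V, c ≠ a ∧ c ≠ b ∧ c ≠ d ∧ a ≠ b ∧ a ≠ d ∧ b ≠ d ∧
      G.mult c a = 1 ∧ G.mult c b = 1 ∧ G.mult c d = 1 ∧
      G.mult a b = 0 ∧ G.mult a d = 0 ∧ G.mult b d = 0

/-- An induced triangle (cycle of length three, all sides simple edges). -/
def IsTriangle (G : Multigraph V) (a b c : V) : Prop :=
  a ≠ b ∧ a ≠ c ∧ b ≠ c ∧ G.mult a b = 1 ∧ G.mult a c = 1 ∧ G.mult b c = 1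

/-- A trumpet: a triangle whose side `ab` is a multiple edge. -/
def IsTrumpet (G : Multigraph V) (a b c : V) : Prop :=
  a ≠ b ∧ a ≠ c ∧ b ≠ c ∧ G.mult a b = 2 ∧ G.mult a c = 1 ∧ G.mult b c = 1

/-- A digon: two vertices joined by parallel edges. -/
def IsDigon (G : Multigraph V) (u v : V) : Prop := u ≠ v ∧ 2 ≤ G.mult u v

/-- A diamond: an induced `K₄` minus the edge `ad`. -/
def IsDiamond (G : Multigraph V) (a b c d : V) : Prop :=
  a ≠ b ∧ a ≠ c ∧ a ≠ d ∧ b ≠ c ∧ b ≠ d ∧ c ≠ d ∧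
  G.mult a d = 0 ∧ G.mult a b = 1 ∧ G.mult a c = 1 ∧ G.mult b c = 1 ∧
  G.mult b d = 1 ∧ G.mult c d = 1

/-- The vertex sets of the diamonds of `G`. -/
def diamondSets (G : Multigraph V) : Set (Finset V) :=
  {s | ∃ a b c d, s = {a, b, c, d} ∧ G.IsDiamond a b c d}

/-- The number of diamonds of `G`. -/
noncomputable def diamondCount (G : Multigraph V) : ℕ := G.diamondSets.ncard

/-- The vertex sets of the digons of `G` that are not the multiple side of a trumpet. -/
def digonSets (G : Multigraph V) : Set (Finset V) :=
  {s | ∃ u v, s = {u, v} ∧ G.IsDigon u v ∧ ∀ w, ¬ G.IsTrumpet u v w}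

/-- The number of digons of `G` (not counting those inside trumpets). -/
noncomputable def digonCount (G : Multigraph V) : ℕ := G.digonSets.ncard

/-- `G` is (isomorphic to) the simple complete graph `K₄`. -/
def IsK4 (G : Multigraph V) : Prop :=
  Nonempty (G.toSimple ≃g (⊤ : SimpleGraph (Fin 4))) ∧ ∀ u v, G.mult u v ≤ 1

section Bisection
variable [Fintype V]

/-- A bisection: the two parts `B` and `Bᶜ` have the same size. -/
def IsBisection (G : Multigraph V) (B : Finset V) : Prop := B.card = Bᶜ.card

/-- The number of monochromatic edges inside the part `B` (with multiplicity). -/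
def monoEdges (G : Multigraph V) (B : Finset V) : ℕ :=
  (∑ u ∈ B, ∑ v ∈ B, G.mult u v) / 2

/-- The total number of monochromatic edges of the bisection `(B, Bᶜ)`. -/
def epsilon (G : Multigraph V) (B : Finset V) : ℕ := G.monoEdges B + G.monoEdges Bᶜ

/-- The simple graph induced by `G` on the part `B`. -/
def inducedSimple (G : Multigraph V) (B : Finset V) : SimpleGraph V where
  Adj u v := u ≠ v ∧ u ∈ B ∧ v ∈ B ∧ 0 < G.mult u v
  symm := ⟨fun u v h => ⟨h.1.symm, h.2.2.1, h.2.1, by rw [G.symm v u]; exact h.2.2.2⟩⟩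
  loopless := ⟨fun v h => h.1 rfl⟩

/-- Every monochromatic component inside `B` has at most `k` vertices. -/
def SmallComponents (G : Multigraph V) (B : Finset V) (k : ℕ) : Prop :=
  ∀ v ∈ B, {u | (G.inducedSimple B).Reachable v u}.ncard ≤ k

/-- A `k`-bisection. -/
def IsKBisection (G : Multigraph V) (B : Finset V) (k : ℕ) : Prop :=
  G.IsBisection B ∧ G.SmallComponents B k ∧ G.SmallComponents Bᶜ k

/-- A desired bisection: (DB1) exactly one monochromatic edge per triangle, (DB2) every
monochromatic edge lies in a triangle, (DB3) exactly one monochromatic edge per diamond,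
(DB4) no multiple edge is monochromatic. -/
def IsDesired (G : Multigraph V) (B : Finset V) : Prop :=
  G.IsBisection B ∧
  (∀ a b c, G.IsTriangle a b c →
    (({(a, b), (a, c), (b, c)} : Finset (V × V)).filter
      (fun e => e.1 ∈ B ↔ e.2 ∈ B)).card = 1) ∧
  (∀ u v, G.Adj u v → (u ∈ B ↔ v ∈ B) → ∃ w, G.IsTriangle u v w) ∧
  (∀ a b c d, G.IsDiamond a b c d →
    (({(a, b), (a, c), (b, c), (b, d), (c, d)} : Finset (V × V)).filter
      (fun e => e.1 ∈ B ↔ e.2 ∈ B)).card = 1) ∧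
  (∀ u v, 2 ≤ G.mult u v → ¬ (u ∈ B ↔ v ∈ B))

end Bisection

end Multigraph

namespace Multigraph

variable {V : Type*} [DecidableEq V]

/-- Delete all edges between `x` and `y`. -/
def deleteEdge (G : Multigraph V) (x y : V) : Multigraph V where
  mult u v := if (u = x ∧ v = y) ∨ (u = y ∧ v = x) then 0 else G.mult u v
  symm := by
    intro u v
    have hsy := G.symm u v
    by_cases h : (u = x ∧ v = y) ∨ (u = y ∧ v = x)
    · have h' : (v = x ∧ u = y) ∨ (v = y ∧ u = x) := by tauto
      simp [h, h']
    · have h' : ¬ ((v = x ∧ u = y) ∨ (v = y ∧ u = x)) := by tauto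
      simp [h, h', hsy]
  loopless := by
    intro v
    by_cases h : (v = x ∧ v = y) ∨ (v = y ∧ v = x) <;> simp [h, G.loopless]

/-- The diamond reduction: delete the diamond vertices `a b c d` and add one new edge
between the outside neighbours `x` and `y`. -/
def diamondReduce (G : Multigraph V) (a b c d x y : V) :
    Multigraph {v : V // v ∉ ({a, b, c, d} : Finset V)} where
  mult u v := if u.1 ≠ v.1 ∧ ((u.1 = x ∧ v.1 = y) ∨ (u.1 = y ∧ v.1 = x))
    then G.mult u.1 v.1 + 1 else G.mult u.1 v.1
  symm := by
    intro u v
    have hsy := G.symm u.1 v.1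
    by_cases h : u.1 ≠ v.1 ∧ ((u.1 = x ∧ v.1 = y) ∨ (u.1 = y ∧ v.1 = x))
    · have h' : v.1 ≠ u.1 ∧ ((v.1 = x ∧ u.1 = y) ∨ (v.1 = y ∧ u.1 = x)) := by tauto
      simp [h, h', hsy]
    · have h' : ¬ (v.1 ≠ u.1 ∧ ((v.1 = x ∧ u.1 = y) ∨ (v.1 = y ∧ u.1 = x))) := by tauto
      simp [h, h', hsy]
  loopless := by
    intro v
    simp [G.loopless]

/-- A ring of two diamonds: two vertex-disjoint diamonds covering all of `V`, joined
cyclically by two edges between their degree-2 vertices. -/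
def IsRingOfTwoDiamonds (G : Multigraph V) : Prop :=
  ∃ a₁ b₁ c₁ d₁ a₂ b₂ c₂ d₂ : V,
    ([a₁, b₁, c₁, d₁, a₂, b₂, c₂, d₂] : List V).Nodup ∧
    (∀ v : V, v ∈ [a₁, b₁, c₁, d₁, a₂, b₂, c₂, d₂]) ∧
    G.IsDiamond a₁ b₁ c₁ d₁ ∧ G.IsDiamond a₂ b₂ c₂ d₂ ∧
    G.mult d₁ a₂ = 1 ∧ G.mult d₂ a₁ = 1

end Multigraph

/-!
In a cubic graph the vertex set of a diamond is the closed neighbourhood of each of its two middle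
vertices, so two diamonds that share a vertex coincide. Hence every diamond of `G` other than
`abcd` lies in `G'`, and every diamond of `G'` avoiding the new edge `xy` lies in `G`. The new edge
matters only when `x` and `y` have a common neighbour `z` outside `abcd`: a diamond of `G'` through
`xy` puts `xy` in a triangle, and a diamond of `G` with ends `x`, `y` has its middle vertices as
common neighbours. In a claw-free cubic graph such a `z` forces a diamond `x z t y`; by
connectivity `G` is then the ring of the two diamonds, and `G'` is `K₄`.
-/

theorem Finset.insert_insert_insert_singleton_rev {α : Type*} [DecidableEq α] (a b c d : α) :
    ({d, c, b, a} : Finset α) = {a, b, c, d} := by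
  ext; simp only [Finset.mem_insert, Finset.mem_singleton]; tauto

namespace Multigraph

variable {V : Type*} {G : Multigraph V}

theorem ne_of_mult_pos {u v : V} (h : 0 < G.mult u v) : u ≠ v := by
  rintro rfl; simp [G.loopless] at h

theorem mult_eq_mult_of_sym2_eq (G : Multigraph V) {u v u' v' : V} (h : s(u, v) = s(u', v')) :
    G.mult u v = G.mult u' v' := by
  rcases Sym2.eq_iff.1 h with ⟨rfl, rfl⟩ | ⟨rfl, rfl⟩
  · rfl
  · exact G.symm _ _

theorem Connected.forall_mem (hG : G.Connected) {s : Set V} {u : V} (hu : u ∈ s)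
    (hs : ∀ v w, v ∈ s → 0 < G.mult v w → w ∈ s) (v : V) : v ∈ s := by
  obtain ⟨p⟩ := hG.preconnected u v
  induction p with
  | nil => exact hu
  | cons hadj _ ih => exact ih (hs _ _ hu hadj.2)

theorem isK4_of_card_eq_four [Fintype V] (hV : Fintype.card V = 4)
    (h : ∀ u v, u ≠ v → G.mult u v = 1) : G.IsK4 := by
  have htop : G.toSimple = ⊤ := by
    ext u v
    exact ⟨fun huv => huv.1, fun huv => ⟨huv, by rw [h u v huv]; exact Nat.one_pos⟩⟩
  refine ⟨⟨htop ▸ SimpleGraph.Iso.completeGraph (Fintype.equivFinOfCardEq hV)⟩, fun u v => ?_⟩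
  by_cases huv : u = v
  · rw [huv, G.loopless]; exact Nat.zero_le 1
  · rw [h u v huv]

theorem IsTriangle.rotate {a b c : V} (h : G.IsTriangle a b c) : G.IsTriangle b c a := by
  obtain ⟨hab, hac, hbc, mab, mac, mbc⟩ := h
  exact ⟨hbc, hab.symm, hac.symm, mbc, G.symm b a ▸ mab, G.symm c a ▸ mac⟩

theorem isDiamond_iff_isTriangle {a b c d : V} : G.IsDiamond a b c d ↔
    G.IsTriangle a b c ∧ G.IsTriangle b c d ∧ a ≠ d ∧ G.mult a d = 0 := by
  unfold IsDiamond IsTriangle; tauto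

namespace IsDiamond

variable {a b c d : V}

theorem swap (h : G.IsDiamond a b c d) : G.IsDiamond a c b d := by
  obtain ⟨hab, hac, had, hbc, hbd, hcd, mad, mab, mac, mbc, mbd, mcd⟩ := h
  exact ⟨hac, hab, had, hbc.symm, hcd, hbd, mad, mac, mab, G.symm b c ▸ mbc, mcd, mbd⟩

theorem symm (h : G.IsDiamond a b c d) : G.IsDiamond d c b a := by
  obtain ⟨hab, hac, had, hbc, hbd, hcd, mad, mab, mac, mbc, mbd, mcd⟩ := h
  exact ⟨hcd.symm, hbd.symm, had.symm, hbc.symm, hac.symm, hab.symm, G.symm a d ▸ mad,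
    G.symm c d ▸ mcd, G.symm b d ▸ mbd, G.symm b c ▸ mbc, G.symm a c ▸ mac, G.symm a b ▸ mab⟩

theorem card_eq_four [DecidableEq V] (h : G.IsDiamond a b c d) :
    ({a, b, c, d} : Finset V).card = 4 := by
  obtain ⟨hab, hac, had, hbc, hbd, hcd, -⟩ := h
  exact Finset.card_eq_four.2 ⟨a, b, c, d, hab, hac, had, hbc, hbd, hcd, rfl⟩

theorem mult_eq_one [DecidableEq V] (h : G.IsDiamond a b c d) {u v : V}
    (hu : u ∈ ({a, b, c, d} : Finset V)) (hv : v ∈ ({a, b, c, d} : Finset V)) (huv : u ≠ v)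
    (hend : s(u, v) ≠ s(a, d)) : G.mult u v = 1 := by
  obtain ⟨hab, hac, had, hbc, hbd, hcd, -, mab, mac, mbc, mbd, mcd⟩ := h
  simp only [Finset.mem_insert, Finset.mem_singleton] at hu hv
  rcases hu with rfl | rfl | rfl | rfl <;> rcases hv with rfl | rfl | rfl | rfl <;>
    first
    | exact absurd rfl huv
    | exact absurd rfl hend
    | exact absurd Sym2.eq_swap hend
    | assumption
    | rw [G.symm]; assumption

end IsDiamond

section Cubic

variable [Fintype V]

namespace IsCubic

variable {v u₁ u₂ u₃ w : V}

theorem sum_mult_le (hG : G.IsCubic) (v : V) (s : Finset V) : ∑ u ∈ s, G.mult v u ≤ 3 :=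
  hG v ▸ Finset.sum_le_univ_sum_of_nonneg fun _ => Nat.zero_le _

theorem mult_eq_one_of_three (hG : G.IsCubic) (h₁₂ : u₁ ≠ u₂) (h₁₃ : u₁ ≠ u₃) (h₂₃ : u₂ ≠ u₃)
    (h₁ : 0 < G.mult v u₁) (h₂ : 0 < G.mult v u₂) (h₃ : 0 < G.mult v u₃) : G.mult v u₁ = 1 := by
  classical
  have := hG.sum_mult_le v {u₁, u₂, u₃}
  rw [Finset.sum_insert (by simp [h₁₂, h₁₃]), Finset.sum_pair h₂₃] at this
  omega

theorem eq_or_eq_or_eq_of_three (hG : G.IsCubic) (h₁₂ : u₁ ≠ u₂) (h₁₃ : u₁ ≠ u₃) (h₂₃ : u₂ ≠ u₃)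
    (h₁ : 0 < G.mult v u₁) (h₂ : 0 < G.mult v u₂) (h₃ : 0 < G.mult v u₃)
    (hw : 0 < G.mult v w) : w = u₁ ∨ w = u₂ ∨ w = u₃ := by
  classical
  by_contra! hne
  obtain ⟨hw₁, hw₂, hw₃⟩ := hne
  have := hG.sum_mult_le v {w, u₁, u₂, u₃}
  rw [Finset.sum_insert (by simp [hw₁, hw₂, hw₃]), Finset.sum_insert (by simp [h₁₂, h₁₃]),
    Finset.sum_pair h₂₃] at this
  omega

theorem exists_third_neighbour (hG : G.IsCubic) (h₁₂ : u₁ ≠ u₂) (h₁ : G.mult v u₁ = 1)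
    (h₂ : G.mult v u₂ = 1) :
    ∃ w, w ≠ u₁ ∧ w ≠ u₂ ∧ 0 < G.mult v w := by
  classical
  by_contra! h
  have hsum : ∑ u ∈ {u₁, u₂}, G.mult v u = ∑ u, G.mult v u :=
    Finset.sum_subset (Finset.subset_univ _) fun w _ hw => by
      simp only [Finset.mem_insert, Finset.mem_singleton, not_or] at hw
      exact Nat.le_zero.1 (h w hw.1 hw.2)
  rw [Finset.sum_pair h₁₂] at hsum
  have := hG v
  unfold degree at this
  omega

end IsCubic

theorem IsClawFree.mult_pos (hclaw : G.IsClawFree) (hG : G.IsCubic) {v u₁ u₂ u₃ : V}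
    (h₁₂ : u₁ ≠ u₂) (h₁₃ : u₁ ≠ u₃) (h₂₃ : u₂ ≠ u₃)
    (h₁ : 0 < G.mult v u₁) (h₂ : 0 < G.mult v u₂) (h₃ : 0 < G.mult v u₃)
    (m₁₂ : G.mult u₁ u₂ = 0) (m₁₃ : G.mult u₁ u₃ = 0) : 0 < G.mult u₂ u₃ := by
  by_contra! m₂₃
  exact hclaw ⟨v, u₁, u₂, u₃, ne_of_mult_pos h₁, ne_of_mult_pos h₂, ne_of_mult_pos h₃,
    h₁₂, h₁₃, h₂₃, hG.mult_eq_one_of_three h₁₂ h₁₃ h₂₃ h₁ h₂ h₃,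
    hG.mult_eq_one_of_three h₁₂.symm h₂₃ h₁₃ h₂ h₁ h₃,
    hG.mult_eq_one_of_three h₁₃.symm h₂₃.symm h₁₂ h₃ h₁ h₂, m₁₂, m₁₃, Nat.le_zero.1 m₂₃⟩

namespace IsDiamond

variable [DecidableEq V] {a b c d x y z A B C D v : V}

theorem mem_iff_middle (h : G.IsDiamond a b c d) (hG : G.IsCubic) :
    z ∈ ({a, b, c, d} : Finset V) ↔ z = b ∨ 0 < G.mult b z := by
  obtain ⟨hab, hac, had, hbc, hbd, hcd, -, mab, -, mbc, mbd, -⟩ := h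
  have mba : G.mult b a = 1 := G.symm a b ▸ mab
  simp only [Finset.mem_insert, Finset.mem_singleton]
  constructor
  · rintro (rfl | rfl | rfl | rfl) <;> simp [mba, mbc, mbd]
  · rintro (rfl | hz)
    · tauto
    · rcases hG.eq_or_eq_or_eq_of_three hac had hcd (by omega) (by omega) (by omega) hz
        with h | h | h <;> simp [h]

theorem mem_iff_middle' (h : G.IsDiamond a b c d) (hG : G.IsCubic) :
    z ∈ ({a, b, c, d} : Finset V) ↔ z = c ∨ 0 < G.mult c z := by
  rw [← h.swap.mem_iff_middle hG, Finset.insert_comm b]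

theorem eq_of_mult_pos_end (h : G.IsDiamond a b c d) (hG : G.IsCubic)
    (hx : x ∉ ({a, b, c, d} : Finset V)) (hax : 0 < G.mult a x) (hz : 0 < G.mult a z) :
    z = b ∨ z = c ∨ z = x := by
  obtain ⟨-, -, -, hbc, -, -, -, mab, mac, -⟩ := h
  simp only [Finset.mem_insert, Finset.mem_singleton, not_or] at hx
  exact hG.eq_or_eq_or_eq_of_three hbc (Ne.symm hx.2.1) (Ne.symm hx.2.2.1) (by omega) (by omega)
    hax hz

theorem mult_end_eq_one (h : G.IsDiamond a b c d) (hG : G.IsCubic)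
    (hx : x ∉ ({a, b, c, d} : Finset V)) (hax : 0 < G.mult a x) : G.mult a x = 1 := by
  obtain ⟨-, -, -, hbc, -, -, -, mab, mac, -⟩ := h
  simp only [Finset.mem_insert, Finset.mem_singleton, not_or] at hx
  exact hG.mult_eq_one_of_three hx.2.1 hx.2.2.1 hbc hax (by omega) (by omega)

theorem mult_end_eq_zero (h : G.IsDiamond a b c d) (hG : G.IsCubic)
    (hx : x ∉ ({a, b, c, d} : Finset V)) (hax : 0 < G.mult a x) {t : V} (hxt : 0 < G.mult x t) :
    G.mult a t = 0 := by
  by_contra! hat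
  rcases h.eq_of_mult_pos_end hG hx hax (Nat.pos_of_ne_zero hat) with rfl | rfl | rfl
  · exact hx ((h.mem_iff_middle hG).2 (Or.inr (G.symm x t ▸ hxt)))
  · exact hx ((h.mem_iff_middle' hG).2 (Or.inr (G.symm x t ▸ hxt)))
  · exact ne_of_mult_pos hxt rfl

theorem exists_end_neighbour (h : G.IsDiamond a b c d) (hG : G.IsCubic) :
    ∃ x, x ∉ ({a, b, c, d} : Finset V) ∧ 0 < G.mult a x := by
  obtain ⟨-, -, -, hbc, -, -, mad, mab, mac, -⟩ := h
  obtain ⟨x, hxb, hxc, hax⟩ := hG.exists_third_neighbour hbc mab mac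
  refine ⟨x, ?_, hax⟩
  simp only [Finset.mem_insert, Finset.mem_singleton, not_or]
  refine ⟨(ne_of_mult_pos hax).symm, hxb, hxc, ?_⟩
  rintro rfl
  omega

theorem finset_eq_of_middle (h : G.IsDiamond a b c d) (h' : G.IsDiamond A B C D)
    (hG : G.IsCubic) (hm : B = b ∨ B = c ∨ C = b ∨ C = c) :
    ({A, B, C, D} : Finset V) = {a, b, c, d} := by
  ext z
  rcases hm with rfl | rfl | rfl | rfl
  · rw [h'.mem_iff_middle hG, h.mem_iff_middle hG]
  · rw [h'.mem_iff_middle hG, h.mem_iff_middle' hG]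
  · rw [h'.mem_iff_middle' hG, h.mem_iff_middle hG]
  · rw [h'.mem_iff_middle' hG, h.mem_iff_middle' hG]

theorem middle_eq_of_end_eq_middle (h : G.IsDiamond a b c d) (h' : G.IsDiamond A B C D)
    (hG : G.IsCubic) (haB : a = B) : C = b ∨ C = c := by
  obtain ⟨x, hx, hax⟩ := h.exists_end_neighbour hG
  subst haB
  obtain ⟨-, hAC, -, -, -, -, -, mAa, mAC, maC, -⟩ := h'
  rcases h.eq_of_mult_pos_end hG hx hax (z := C) (by omega) with hC | hC | rfl
  · exact Or.inl hC
  · exact Or.inr hC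
  · exfalso
    rcases h.eq_of_mult_pos_end hG hx hax (z := A) (by rw [G.symm]; omega) with rfl | rfl | rfl
    · exact hx ((h.mem_iff_middle hG).2 (Or.inr (by omega)))
    · exact hx ((h.mem_iff_middle' hG).2 (Or.inr (by omega)))
    · exact hAC rfl

theorem middle_eq_of_end_eq_end (h : G.IsDiamond a b c d) (h' : G.IsDiamond A B C D)
    (hG : G.IsCubic) (haA : a = A) : B = b ∨ B = c ∨ C = b ∨ C = c := by
  obtain ⟨x, hx, hax⟩ := h.exists_end_neighbour hG
  subst haA
  obtain ⟨-, -, -, hBC, -, -, -, maB, maC, -⟩ := h'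
  rcases h.eq_of_mult_pos_end hG hx hax (z := B) (by omega) with hB | hB | rfl
  · exact Or.inl hB
  · exact Or.inr (Or.inl hB)
  · rcases h.eq_of_mult_pos_end hG hx hax (z := C) (by omega) with hC | hC | rfl
    · exact Or.inr (Or.inr (Or.inl hC))
    · exact Or.inr (Or.inr (Or.inr hC))
    · exact absurd rfl hBC

theorem finset_eq_of_mem_left (h : G.IsDiamond a b c d) (h' : G.IsDiamond A B C D)
    (hG : G.IsCubic) (hv : v = a ∨ v = b) (hv' : v = A ∨ v = B) :
    ({A, B, C, D} : Finset V) = {a, b, c, d} := by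
  apply h.finset_eq_of_middle h' hG
  rcases hv with hva | hvb <;> rcases hv' with hvA | hvB
  · exact h.middle_eq_of_end_eq_end h' hG (hva.symm.trans hvA)
  · exact Or.inr (Or.inr (h.middle_eq_of_end_eq_middle h' hG (hva.symm.trans hvB)))
  · obtain rfl : b = A := hvb.symm.trans hvA
    have hB : B ∈ ({a, b, c, d} : Finset V) :=
      (h.mem_iff_middle hG).2 (Or.inr (by obtain ⟨-, -, -, -, -, -, -, mbB, -⟩ := h'; omega))
    simp only [Finset.mem_insert, Finset.mem_singleton] at hB
    rcases hB with rfl | rfl | rfl | rfl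
    · exact Or.inr (Or.inr (h.middle_eq_of_end_eq_middle h' hG rfl))
    · exact absurd rfl h'.1
    · exact Or.inr (Or.inl rfl)
    · exact (h.symm.middle_eq_of_end_eq_middle h' hG rfl).elim
        (fun hC => Or.inr (Or.inr (Or.inr hC))) (fun hC => Or.inr (Or.inr (Or.inl hC)))
  · exact Or.inl (hvb.symm.trans hvB).symm

theorem finset_eq_of_mem (h : G.IsDiamond a b c d) (h' : G.IsDiamond A B C D)
    (hG : G.IsCubic) (hv : v ∈ ({a, b, c, d} : Finset V)) (hv' : v ∈ ({A, B, C, D} : Finset V)) :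
    ({A, B, C, D} : Finset V) = {a, b, c, d} := by
  have key : ∀ {a b c d : V}, G.IsDiamond a b c d → (v = a ∨ v = b) →
      ({A, B, C, D} : Finset V) = {a, b, c, d} := fun hS hvS => by
    simp only [Finset.mem_insert, Finset.mem_singleton] at hv'
    rcases hv' with hA | hB | hC | hD
    · exact hS.finset_eq_of_mem_left h' hG hvS (Or.inl hA)
    · exact hS.finset_eq_of_mem_left h' hG hvS (Or.inr hB)
    · rw [← Finset.insert_insert_insert_singleton_rev A]
      exact hS.finset_eq_of_mem_left h'.symm hG hvS (Or.inr hC)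
    · rw [← Finset.insert_insert_insert_singleton_rev A]
      exact hS.finset_eq_of_mem_left h'.symm hG hvS (Or.inl hD)
  simp only [Finset.mem_insert, Finset.mem_singleton] at hv
  rcases hv with hva | hvb | hvc | hvd
  · exact key h (Or.inl hva)
  · exact key h (Or.inr hvb)
  · rw [← Finset.insert_insert_insert_singleton_rev a]; exact key h.symm (Or.inr hvc)
  · rw [← Finset.insert_insert_insert_singleton_rev a]; exact key h.symm (Or.inl hvd)

theorem disjoint_of_ne (h : G.IsDiamond a b c d) (h' : G.IsDiamond A B C D) (hG : G.IsCubic)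
    (hne : ({A, B, C, D} : Finset V) ≠ {a, b, c, d}) :
    Disjoint ({A, B, C, D} : Finset V) {a, b, c, d} :=
  Finset.disjoint_left.2 fun _ hv' hv => hne (h.finset_eq_of_mem h' hG hv hv')

theorem ne_of_isClawFree (h : G.IsDiamond a b c d) (hG : G.IsCubic) (hclaw : G.IsClawFree)
    (hx : x ∉ ({a, b, c, d} : Finset V)) (hax : 0 < G.mult a x)
    (hy : y ∉ ({a, b, c, d} : Finset V)) (hdy : 0 < G.mult d y) : x ≠ y := by
  rintro rfl
  have hd' : x ∉ ({d, c, b, a} : Finset V) := by rwa [Finset.insert_insert_insert_singleton_rev]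
  obtain ⟨-, -, had, -, -, -, mad, -⟩ := id h
  obtain ⟨t, hta, htd, hxt⟩ := hG.exists_third_neighbour had
    (G.symm a x ▸ h.mult_end_eq_one hG hx hax) (G.symm d x ▸ h.symm.mult_end_eq_one hG hd' hdy)
  have hdt := hclaw.mult_pos hG had hta.symm htd.symm (G.symm a x ▸ hax) (G.symm d x ▸ hdy) hxt
    mad (h.mult_end_eq_zero hG hx hax hxt)
  exact hdt.ne' (h.symm.mult_end_eq_zero hG hd' hdy hxt)

theorem exists_triangle_of_end_neighbour (h : G.IsDiamond a b c d) (hG : G.IsCubic)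
    (hclaw : G.IsClawFree) (hx : x ∉ ({a, b, c, d} : Finset V)) (hax : 0 < G.mult a x)
    (hz : z ∉ ({a, b, c, d} : Finset V)) (hxz : G.mult x z = 1) :
    ∃ t, G.mult x t = 1 ∧ 0 < G.mult z t ∧ ∀ w, 0 < G.mult x w → w = a ∨ w = z ∨ w = t := by
  have haz : a ≠ z := fun e => hz (e ▸ by simp)
  have hxa : 0 < G.mult x a := G.symm a x ▸ hax
  obtain ⟨t, hta, htz, hxt⟩ :=
    hG.exists_third_neighbour haz (G.symm a x ▸ h.mult_end_eq_one hG hx hax) hxz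
  refine ⟨t, hG.mult_eq_one_of_three hta htz haz hxt hxa (by omega), ?_,
    fun w hw => hG.eq_or_eq_or_eq_of_three haz hta.symm htz.symm hxa (by omega) hxt hw⟩
  exact hclaw.mult_pos hG haz hta.symm htz.symm hxa (by omega) hxt
    (h.mult_end_eq_zero hG hx hax (by omega)) (h.mult_end_eq_zero hG hx hax hxt)

-- Claw-freeness at `x` makes `z` adjacent to the third neighbour `t` of `x`, and likewise at `y`;
-- since `z` is cubic these two third neighbours coincide.
theorem exists_isDiamond_of_common_neighbour (h : G.IsDiamond a b c d) (hG : G.IsCubic)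
    (hclaw : G.IsClawFree) (hx : x ∉ ({a, b, c, d} : Finset V)) (hax : 0 < G.mult a x)
    (hy : y ∉ ({a, b, c, d} : Finset V)) (hdy : 0 < G.mult d y) (hxy : G.mult x y = 0)
    (hz : z ∉ ({a, b, c, d} : Finset V)) (hxz : G.mult x z = 1) (hyz : G.mult y z = 1) :
    ∃ t, G.IsDiamond x z t y := by
  have hxy' : x ≠ y := h.ne_of_isClawFree hG hclaw hx hax hy hdy
  rw [← Finset.insert_insert_insert_singleton_rev a] at hy
  obtain ⟨t, hxt, hzt, -⟩ := h.exists_triangle_of_end_neighbour hG hclaw hx hax hz hxz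
  rw [← Finset.insert_insert_insert_singleton_rev a] at hz
  obtain ⟨t', hyt', hzt', -⟩ := h.symm.exists_triangle_of_end_neighbour hG hclaw hy hdy hz hyz
  have htx : t ≠ x := (ne_of_mult_pos (by omega : 0 < G.mult x t)).symm
  have hty : t ≠ y := by rintro rfl; omega
  have hzx : 0 < G.mult z x := by rw [G.symm]; omega
  have hzy : 0 < G.mult z y := by rw [G.symm]; omega
  have ht' : t = t' := by
    rcases hG.eq_or_eq_or_eq_of_three hxy' htx.symm hty.symm hzx hzy hzt hzt' with rfl | rfl | ht'
    · rw [G.symm] at hxy; omega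
    · exact absurd hyt' (by simp [G.loopless])
    · exact ht'.symm
  subst ht'
  refine ⟨t, ne_of_mult_pos (by omega : 0 < G.mult x z), htx.symm, hxy', ne_of_mult_pos hzt,
    (ne_of_mult_pos (by omega : 0 < G.mult y z)).symm,
    hty, hxy, hxz, hxt, hG.mult_eq_one_of_three htx hty hxy' hzt hzx hzy, G.symm y z ▸ hyz,
    G.symm y t ▸ hyt'⟩

end IsDiamond

end Cubic

section Reduce

variable [DecidableEq V] {a b c d x y : V}
  {u v w A B C D : {v : V // v ∉ ({a, b, c, d} : Finset V)}}

variable (G) in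
theorem diamondReduce_mult_of_ne (h : s(u.1, v.1) ≠ s(x, y)) :
    (G.diamondReduce a b c d x y).mult u v = G.mult u v := by
  simp only [diamondReduce]
  rw [if_neg fun h' => h (Sym2.eq_iff.2 h'.2)]

variable (G) in
theorem diamondReduce_mult_of_eq (huv : u ≠ v) (h : s(u.1, v.1) = s(x, y)) :
    (G.diamondReduce a b c d x y).mult u v = G.mult x y + 1 := by
  simp only [diamondReduce]
  rw [if_pos ⟨fun e => huv (Subtype.ext e), Sym2.eq_iff.1 h⟩, G.mult_eq_mult_of_sym2_eq h]

variable (G) in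
theorem mult_le_diamondReduce_mult :
    G.mult u v ≤ (G.diamondReduce a b c d x y).mult u v := by
  simp only [diamondReduce]
  split_ifs <;> omega

theorem mult_eq_one_of_isTriangle_diamondReduce
    (hN : ∀ z ∉ ({a, b, c, d} : Finset V), G.mult x z = 1 → G.mult y z ≠ 1)
    (ht : (G.diamondReduce a b c d x y).IsTriangle u v w) : G.mult u v = 1 := by
  obtain ⟨-, huw, hvw, muv, muw, mvw⟩ := ht
  by_cases h : s(u.1, v.1) = s(x, y)
  · have huw' : s(u.1, w.1) ≠ s(x, y) := fun h' =>
      hvw (Subtype.ext (Sym2.congr_right.1 (h.trans h'.symm)))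
    have hvw' : s(v.1, w.1) ≠ s(x, y) := fun h' =>
      huw (Subtype.ext (Sym2.congr_right.1 (h'.trans (h.symm.trans Sym2.eq_swap))).symm)
    rw [diamondReduce_mult_of_ne G huw'] at muw
    rw [diamondReduce_mult_of_ne G hvw'] at mvw
    rcases Sym2.eq_iff.1 h with ⟨hu, hv⟩ | ⟨hu, hv⟩
    · exact (hN w w.2 (hu ▸ muw) (hv ▸ mvw)).elim
    · exact (hN w w.2 (hv ▸ mvw) (hu ▸ muw)).elim
  · rwa [diamondReduce_mult_of_ne G h] at muv

theorem isTriangle_of_isTriangle_diamondReduce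
    (hN : ∀ z ∉ ({a, b, c, d} : Finset V), G.mult x z = 1 → G.mult y z ≠ 1)
    (ht : (G.diamondReduce a b c d x y).IsTriangle u v w) : G.IsTriangle u v w :=
  ⟨fun e => ht.1 (Subtype.ext e), fun e => ht.2.1 (Subtype.ext e),
    fun e => ht.2.2.1 (Subtype.ext e), mult_eq_one_of_isTriangle_diamondReduce hN ht,
    G.symm w u ▸ mult_eq_one_of_isTriangle_diamondReduce hN ht.rotate.rotate,
    mult_eq_one_of_isTriangle_diamondReduce hN ht.rotate⟩

theorem isDiamond_of_isDiamond_diamondReduce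
    (hN : ∀ z ∉ ({a, b, c, d} : Finset V), G.mult x z = 1 → G.mult y z ≠ 1)
    (h : (G.diamondReduce a b c d x y).IsDiamond A B C D) : G.IsDiamond A B C D := by
  obtain ⟨hABC, hBCD, hAD, mAD⟩ := isDiamond_iff_isTriangle.1 h
  exact isDiamond_iff_isTriangle.2 ⟨isTriangle_of_isTriangle_diamondReduce hN hABC,
    isTriangle_of_isTriangle_diamondReduce hN hBCD, fun e => hAD (Subtype.ext e),
    Nat.le_zero.1 (mAD ▸ mult_le_diamondReduce_mult G (u := A) (v := D))⟩

theorem isDiamond_diamondReduce_of_isDiamond (hxy : G.mult x y = 0)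
    (hN : ∀ z ∉ ({a, b, c, d} : Finset V), G.mult x z = 1 → G.mult y z ≠ 1)
    (h : G.IsDiamond A B C D) : (G.diamondReduce a b c d x y).IsDiamond A B C D := by
  have edge (u v : {v : V // v ∉ ({a, b, c, d} : Finset V)}) (huv : G.mult u v = 1) :
      (G.diamondReduce a b c d x y).mult u v = 1 := by
    rwa [diamondReduce_mult_of_ne]
    intro h
    rw [G.mult_eq_mult_of_sym2_eq h] at huv
    omega
  obtain ⟨hAB, hAC, hAD, hBC, hBD, hCD, mAD, mAB, mAC, mBC, mBD, mCD⟩ := h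
  have hAD' : s(A.1, D.1) ≠ s(x, y) := by
    intro h
    have mDB : G.mult D B = 1 := G.symm B D ▸ mBD
    rcases Sym2.eq_iff.1 h with ⟨hA, hD⟩ | ⟨hA, hD⟩
    · exact hN B B.2 (hA ▸ mAB) (hD ▸ mDB)
    · exact hN B B.2 (hD ▸ mDB) (hA ▸ mAB)
  exact ⟨fun e => hAB (congrArg Subtype.val e), fun e => hAC (congrArg Subtype.val e),
    fun e => hAD (congrArg Subtype.val e), fun e => hBC (congrArg Subtype.val e),
    fun e => hBD (congrArg Subtype.val e), fun e => hCD (congrArg Subtype.val e),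
    (diamondReduce_mult_of_ne G hAD').trans mAD, edge A B mAB, edge A C mAC, edge B C mBC,
    edge B D mBD, edge C D mCD⟩

variable [Fintype V]

namespace IsDiamond

variable {p q : V}

theorem mem_union_of_connected (h : G.IsDiamond a b c d) (h' : G.IsDiamond x p q y)
    (hG : G.IsCubic) (hconn : G.Connected) (hx : x ∉ ({a, b, c, d} : Finset V))
    (hax : 0 < G.mult a x) (hy : y ∉ ({a, b, c, d} : Finset V)) (hdy : 0 < G.mult d y)
    (v : V) : v ∈ ({a, b, c, d} ∪ {x, p, q, y} : Finset V) := by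
  have hdisj := h.disjoint_of_ne h' hG fun e => hx (e ▸ by simp)
  have ha : a ∉ ({x, p, q, y} : Finset V) := Finset.disjoint_right.1 hdisj (by simp)
  have hd : d ∉ ({y, q, p, x} : Finset V) := by
    rw [Finset.insert_insert_insert_singleton_rev]; exact Finset.disjoint_right.1 hdisj (by simp)
  have hy' : y ∉ ({d, c, b, a} : Finset V) := by rwa [Finset.insert_insert_insert_singleton_rev]
  refine hconn.forall_mem (s := (({a, b, c, d} ∪ {x, p, q, y} : Finset V) : Set V)) (u := a)
    (by simp) (fun v w hv hvw => ?_) v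
  simp only [Finset.coe_union, Set.mem_union, Finset.mem_coe] at hv ⊢
  simp only [Finset.mem_insert, Finset.mem_singleton] at hv
  rcases hv with (rfl | rfl | rfl | rfl) | (rfl | rfl | rfl | rfl)
  · have := h.eq_of_mult_pos_end hG hx hax hvw
    simp only [Finset.mem_insert, Finset.mem_singleton]; tauto
  · exact Or.inl ((h.mem_iff_middle hG).2 (Or.inr hvw))
  · exact Or.inl ((h.mem_iff_middle' hG).2 (Or.inr hvw))
  · have := h.symm.eq_of_mult_pos_end hG hy' hdy hvw
    simp only [Finset.mem_insert, Finset.mem_singleton]; tauto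
  · have := h'.eq_of_mult_pos_end hG ha (G.symm a _ ▸ hax) hvw
    simp only [Finset.mem_insert, Finset.mem_singleton]; tauto
  · exact Or.inr ((h'.mem_iff_middle hG).2 (Or.inr hvw))
  · exact Or.inr ((h'.mem_iff_middle' hG).2 (Or.inr hvw))
  · have := h'.symm.eq_of_mult_pos_end hG hd (G.symm d _ ▸ hdy) hvw
    simp only [Finset.mem_insert, Finset.mem_singleton]; tauto

theorem diamondReduce_isK4 (h : G.IsDiamond a b c d) (h' : G.IsDiamond x p q y)
    (hG : G.IsCubic) (hconn : G.Connected) (hx : x ∉ ({a, b, c, d} : Finset V))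
    (hax : 0 < G.mult a x) (hy : y ∉ ({a, b, c, d} : Finset V)) (hdy : 0 < G.mult d y) :
    (G.diamondReduce a b c d x y).IsK4 := by
  have hdisj := h.disjoint_of_ne h' hG fun e => hx (e ▸ by simp)
  have hmem (v : V) (hv : v ∉ ({a, b, c, d} : Finset V)) : v ∈ ({x, p, q, y} : Finset V) :=
    (Finset.mem_union.1 (h.mem_union_of_connected h' hG hconn hx hax hy hdy v)).resolve_left hv
  apply isK4_of_card_eq_four
  · rw [Fintype.card_subtype, ← h'.card_eq_four]
    congr 1
    ext v
    simp only [Finset.mem_filter, Finset.mem_univ, true_and]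
    exact ⟨hmem v, fun hv => Finset.disjoint_left.1 hdisj hv⟩
  · intro u v huv
    by_cases he : s(u.1, v.1) = s(x, y)
    · obtain ⟨-, -, -, -, -, -, mxy, -⟩ := h'
      rw [diamondReduce_mult_of_eq G huv he, mxy]
    · rw [diamondReduce_mult_of_ne G he]
      exact h'.mult_eq_one (hmem u u.2) (hmem v v.2) (fun e => huv (Subtype.ext e)) he

theorem diamondCount_diamondReduce_add_one (h : G.IsDiamond a b c d) (hG : G.IsCubic)
    (hxy : G.mult x y = 0)
    (hN : ∀ z ∉ ({a, b, c, d} : Finset V), G.mult x z = 1 → G.mult y z ≠ 1) :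
    (G.diamondReduce a b c d x y).diamondCount + 1 = G.diamondCount := by
  set e := Function.Embedding.subtype (· ∉ ({a, b, c, d} : Finset V))
  have himage : Finset.map e '' (G.diamondReduce a b c d x y).diamondSets =
      G.diamondSets \ {{a, b, c, d}} := by
    ext s
    constructor
    · rintro ⟨_, ⟨A, B, C, D, rfl, hT⟩, rfl⟩
      have hmap : Finset.map e {A, B, C, D} = {A.1, B.1, C.1, D.1} := by simp [e]
      refine ⟨⟨A, B, C, D, hmap, isDiamond_of_isDiamond_diamondReduce hN hT⟩, fun hs => ?_⟩
      have hA : A.1 ∈ Finset.map e {A, B, C, D} := by simp [hmap]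
      rw [Set.mem_singleton_iff.1 hs] at hA
      exact A.2 hA
    · rintro ⟨⟨A, B, C, D, rfl, hT⟩, hne⟩
      have hout (v : V) (hv : v ∈ ({A, B, C, D} : Finset V)) : v ∉ ({a, b, c, d} : Finset V) :=
        Finset.disjoint_left.1 (h.disjoint_of_ne hT hG hne) hv
      refine ⟨{⟨A, hout A (by simp)⟩, ⟨B, hout B (by simp)⟩, ⟨C, hout C (by simp)⟩,
        ⟨D, hout D (by simp)⟩}, ⟨_, _, _, _, rfl, isDiamond_diamondReduce_of_isDiamond hxy hN hT⟩,
        by simp [e]⟩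
  rw [diamondCount, diamondCount, ← Set.ncard_image_of_injective _ (Finset.map_injective e),
    himage]
  exact Set.ncard_sdiff_singleton_add_one ⟨a, b, c, d, rfl, h⟩ (Set.toFinite _)

end IsDiamond

end Reduce

end Multigraph

theorem stmt15_general {V : Type*} [Fintype V] [DecidableEq V] (G : Multigraph V)
    (hconn : G.Connected) (hclaw : G.IsClawFree) (hcubic : G.IsCubic)
    (a b c d x y : V) (hdiam : G.IsDiamond a b c d)
    (hx : G.Adj a x) (hxo : x ∉ ({a, b, c, d} : Finset V))
    (hy : G.Adj d y) (hyo : y ∉ ({a, b, c, d} : Finset V))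
    (hK4' : ¬ (G.diamondReduce a b c d x y).IsK4) (hxy : G.mult x y = 0) :
    (G.diamondReduce a b c d x y).diamondCount + 1 = G.diamondCount := by
  refine hdiam.diamondCount_diamondReduce_add_one hcubic hxy fun z hz hxz hyz => hK4' ?_
  obtain ⟨t, ht⟩ := hdiam.exists_isDiamond_of_common_neighbour hcubic hclaw hxo hx.2 hyo hy.2
    hxy hz hxz hyz
  exact hdiam.diamondReduce_isK4 ht hcubic hconn hxo hx.2 hyo hy.2

/-- If `G'` is not `K₄` and `xy` was not an edge of `G`, then `G'` has exactly
one diamond fewer than `G`. -/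
theorem stmt15 {V : Type*} [Fintype V] [DecidableEq V] (G : Multigraph V)
    (hconn : G.Connected) (hclaw : G.IsClawFree) (hcubic : G.IsCubic)
    (hK4 : ¬ G.IsK4) (a b c d x y : V) (hdiam : G.IsDiamond a b c d)
    (hx : G.Adj a x) (hxo : x ∉ ({a, b, c, d} : Finset V))
    (hy : G.Adj d y) (hyo : y ∉ ({a, b, c, d} : Finset V))
    (hK4' : ¬ (G.diamondReduce a b c d x y).IsK4) (hxy : G.mult x y = 0) :
    (G.diamondReduce a b c d x y).diamondCount + 1 = G.diamondCount :=
  stmt15_general G hconn hclaw hcubic a b c d x y hdiam hx hxo hy hyo hK4' hxy
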